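/- arXiv:2009.08890 — 9 statements merged into one kernel-verified Lean document; each statement's English description precedes it below -/
import Mathlib

section
/- For all real z with 0 ≤ z ≤ 1, we have z + z³/3 ≤ tan(z) ≤ z + 2z³/3. -/
/-!
Integrating `x - x ^ 3 / 6 ≤ sin x` three times on `[0, ∞)` gives the Taylor bounds
`cos x ≤ 1 - x²/2 + x⁴/24`, `sin x ≤ x - x³/6 + x⁵/120` and `1 - x²/2 + x⁴/24 - x⁶/720 ≤ cos x`.
Writing `tan = sin / cos` and clearing the positive denominator, both bounds on `tan` reduce to
polynomial inequalities on `[0, 1]`.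
-/

open Real Set

theorem le_of_hasDerivAt_le {f g f' g' : ℝ → ℝ} {a x : ℝ} (hax : a ≤ x)
    (hf : ∀ y, HasDerivAt f (f' y) y) (hg : ∀ y, HasDerivAt g (g' y) y) (ha : f a ≤ g a)
    (hle : ∀ y ∈ Ico a x, f' y ≤ g' y) : f x ≤ g x :=
  image_le_of_deriv_right_le_deriv_boundary
    (HasDerivAt.continuousOn fun y _ ↦ hf y) (fun y _ ↦ (hf y).hasDerivWithinAt) ha
    (HasDerivAt.continuousOn fun y _ ↦ hg y) (fun y _ ↦ (hg y).hasDerivWithinAt) hle ⟨hax, le_rfl⟩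

namespace Real

variable {x : ℝ}

theorem cos_le_taylor_four (hx : 0 ≤ x) : cos x ≤ 1 - x ^ 2 / 2 + x ^ 4 / 24 := by
  refine le_of_hasDerivAt_le (g := fun y ↦ 1 - y ^ 2 / 2 + y ^ 4 / 24)
    (g' := fun y ↦ -y + y ^ 3 / 6) hx hasDerivAt_cos (fun y ↦ ?_) (by simp)
    (fun y hy ↦ by linarith [sin_ge_sub_cube hy.1])
  exact (((hasDerivAt_const y 1).fun_sub ((hasDerivAt_pow 2 y).div_const 2)).fun_add
    ((hasDerivAt_pow 4 y).div_const 24)).congr_deriv (by norm_num; ring)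

theorem sin_le_taylor_five (hx : 0 ≤ x) : sin x ≤ x - x ^ 3 / 6 + x ^ 5 / 120 := by
  refine le_of_hasDerivAt_le (g := fun y ↦ y - y ^ 3 / 6 + y ^ 5 / 120)
    (g' := fun y ↦ 1 - y ^ 2 / 2 + y ^ 4 / 24) hx hasDerivAt_sin (fun y ↦ ?_) (by simp)
    (fun y hy ↦ cos_le_taylor_four hy.1)
  exact (((hasDerivAt_id' y).fun_sub ((hasDerivAt_pow 3 y).div_const 6)).fun_add
    ((hasDerivAt_pow 5 y).div_const 120)).congr_deriv (by norm_num; ring)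

theorem cos_ge_taylor_six (hx : 0 ≤ x) : 1 - x ^ 2 / 2 + x ^ 4 / 24 - x ^ 6 / 720 ≤ cos x := by
  refine le_of_hasDerivAt_le (f := fun y ↦ 1 - y ^ 2 / 2 + y ^ 4 / 24 - y ^ 6 / 720)
    (f' := fun y ↦ -y + y ^ 3 / 6 - y ^ 5 / 120) hx (fun y ↦ ?_) hasDerivAt_cos (by simp)
    (fun y hy ↦ by linarith [sin_le_taylor_five hy.1])
  exact ((((hasDerivAt_const y 1).fun_sub ((hasDerivAt_pow 2 y).div_const 2)).fun_add
    ((hasDerivAt_pow 4 y).div_const 24)).fun_sub ((hasDerivAt_pow 6 y).div_const 720)).congr_deriv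
    (by norm_num; ring)

theorem add_cube_div_three_le_tan (h0 : 0 ≤ x) (h1 : x < π / 2) : x + x ^ 3 / 3 ≤ tan x := by
  have hcos : 0 < cos x := cos_pos_of_mem_Ioo ⟨by linarith [pi_pos], h1⟩
  have hx2 : x ^ 2 ≤ 9 := by nlinarith [pi_lt_four]
  rw [tan_eq_sin_div_cos, le_div_iff₀ hcos]
  calc (x + x ^ 3 / 3) * cos x ≤ (x + x ^ 3 / 3) * (1 - x ^ 2 / 2 + x ^ 4 / 24) := by
        gcongr
        exact cos_le_taylor_four h0
    _ = x - x ^ 3 / 6 - x ^ 5 * (9 - x ^ 2) / 72 := by ring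
    _ ≤ x - x ^ 3 / 6 := by
        have : 0 ≤ x ^ 5 * (9 - x ^ 2) := mul_nonneg (by positivity) (by linarith)
        linarith
    _ ≤ sin x := sin_ge_sub_cube h0

theorem tan_le_add_two_mul_cube_div_three (h0 : 0 ≤ x) (h1 : x ≤ 1) :
    tan x ≤ x + 2 * x ^ 3 / 3 := by
  have hcos : 0 < cos x := cos_pos_of_mem_Ioo ⟨by linarith [pi_pos], by linarith [pi_gt_three]⟩
  rw [tan_eq_sin_div_cos, div_le_iff₀ hcos]
  calc sin x ≤ x - x ^ 3 / 6 + x ^ 5 / 120 := sin_le_taylor_five h0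
    _ ≤ x - x ^ 3 / 6 + x ^ 5 / 120
          + x ^ 3 * ((1 / 3 - 3 * x ^ 2 / 10) + x ^ 4 * (19 / 720 - x ^ 2 / 1080)) := by
        have hx2 : x ^ 2 ≤ 1 := pow_le_one₀ h0 h1
        have : 0 ≤ x ^ 4 * (19 / 720 - x ^ 2 / 1080) := mul_nonneg (by positivity) (by linarith)
        exact le_add_of_nonneg_right (mul_nonneg (by positivity) (by linarith))
    _ = (x + 2 * x ^ 3 / 3) * (1 - x ^ 2 / 2 + x ^ 4 / 24 - x ^ 6 / 720) := by ring
    _ ≤ (x + 2 * x ^ 3 / 3) * cos x := by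
        gcongr
        exact cos_ge_taylor_six h0

end Real

theorem tan_bounds (z : ℝ) (h0 : 0 ≤ z) (h1 : z ≤ 1) :
    z + z ^ 3 / 3 ≤ Real.tan z ∧ Real.tan z ≤ z + 2 * z ^ 3 / 3 :=
  ⟨add_cube_div_three_le_tan h0 (by linarith [pi_gt_three]),
    tan_le_add_two_mul_cube_div_three h0 h1⟩
end

section
/- Let a > 0 and 0 < h < π/(2a). Then the equation tan(hq) = 2aq/(q² − a²) has a solution q in the open interval (0, π/(2h)). -/
/-!
With `g q = sin (h q) (q² - a²) - 2 a q cos (h q)` we have `g a = -2 a² cos (h a) < 0` and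
`g (π / (2h)) = (π / (2h))² - a² > 0`, so `g` vanishes at some `q ∈ (a, π / (2h))` by the
intermediate value theorem. There `cos (h q) > 0` and `q² ≠ a²`, so `g q = 0` is the equation.
-/

open Real Set

lemma Real.tan_eq_div_of_sin_mul_eq {x n d : ℝ} (hx : cos x ≠ 0) (hd : d ≠ 0)
    (hsc : sin x * d = n * cos x) : tan x = n / d := by
  rw [tan_eq_sin_div_cos, div_eq_div_iff hx hd, hsc]

lemma Real.cos_mul_pos_of_mem_Ico {h q : ℝ} (hh : 0 < h) (hq : q ∈ Ico 0 (π / (2 * h))) :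
    0 < cos (h * q) := by
  have hlt : h * q < π / 2 := by
    have hqb := hq.2
    rw [lt_div_iff₀ (by positivity)] at hqb ⊢
    linarith
  exact cos_pos_of_mem_Ioo ⟨by linarith [pi_pos, mul_nonneg hh.le hq.1], hlt⟩

lemma exists_sin_mul_sub_sq_eq_cos_mul {a h : ℝ} (ha : 0 < a) (hh : 0 < h)
    (hab : a < π / (2 * h)) :
    ∃ q ∈ Ioo a (π / (2 * h)), sin (h * q) * (q ^ 2 - a ^ 2) = 2 * a * q * cos (h * q) := by
  set b := π / (2 * h)
  let g : ℝ → ℝ := fun q ↦ sin (h * q) * (q ^ 2 - a ^ 2) - 2 * a * q * cos (h * q)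
  have hga : g a < 0 := by
    have := cos_mul_pos_of_mem_Ico hh ⟨ha.le, hab⟩
    simp only [g, sub_self, mul_zero, zero_sub, neg_lt_zero]
    positivity
  have hgb : 0 < g b := by
    have hhb : h * b = π / 2 := by simp only [b]; field_simp
    simp only [g, hhb, sin_pi_div_two, cos_pi_div_two, one_mul, mul_zero, sub_zero, sub_pos]
    exact pow_lt_pow_left₀ hab ha.le two_ne_zero
  obtain ⟨q, hq, hgq⟩ := intermediate_value_Ioo hab.le (by fun_prop : Continuous g).continuousOn
    ⟨hga, hgb⟩
  exact ⟨q, hq, sub_eq_zero.mp hgq⟩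

theorem exists_first_solution (a h : ℝ) (ha : 0 < a) (hh : 0 < h)
    (hha : h < Real.pi / (2 * a)) :
    ∃ q ∈ Set.Ioo (0 : ℝ) (Real.pi / (2 * h)),
      q ≠ a ∧ Real.tan (h * q) = 2 * a * q / (q ^ 2 - a ^ 2) := by
  have hab : a < π / (2 * h) := by
    rw [lt_div_iff₀ (by positivity)] at hha ⊢
    linarith
  obtain ⟨q, ⟨haq, hqb⟩, hq⟩ := exists_sin_mul_sub_sq_eq_cos_mul ha hh hab
  have hcos := cos_mul_pos_of_mem_Ico hh ⟨(ha.trans haq).le, hqb⟩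
  have hsq : q ^ 2 - a ^ 2 ≠ 0 := (sub_pos.mpr (pow_lt_pow_left₀ haq ha.le two_ne_zero)).ne'
  exact ⟨q, ⟨ha.trans haq, hqb⟩, haq.ne', tan_eq_div_of_sin_mul_eq hcos.ne' hsq hq⟩
end

section
/- Let a > 0 and 0 < h < π/(2a). For every integer m ≥ 2, the equation tan(hq) = 2aq/(q² − a²) has a solution q in the open interval ((m−1)π/h, (m−1)π/h + π/(2h)). -/
/-!
On `[(m-1)π/h, (m-1)π/h + π/(2h))` the map `q ↦ tan (h q)` increases from `0` to `+∞`, while the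
right-hand side is continuous and positive there, because `(m-1)π/h ≥ π/h > 2a > a`. Bounding the
right-hand side on the closed interval, the intermediate value theorem yields the solution.
-/

open Real Set

theorem exists_tan_eq_of_continuousOn (k : ℤ) {f : ℝ → ℝ}
    (hf : ContinuousOn f (Icc (k * π) (k * π + π / 2))) (hf₀ : 0 < f (k * π)) :
    ∃ x ∈ Ioo (k * π) (k * π + π / 2), tan x = f x := by
  obtain ⟨M, hM⟩ := isCompact_Icc.bddAbove_image hf
  have hfM : ∀ y ∈ Icc (0 : ℝ) (π / 2), f (k * π + y) ≤ M := fun y hy ↦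
    hM ⟨k * π + y, ⟨by linarith [hy.1], by linarith [hy.2]⟩, rfl⟩
  -- Beyond `arctan M` the tangent already exceeds every value of `f`.
  set t := arctan M
  have ht₀ : 0 < t := arctan_pos.2 <| hf₀.trans_le <| by
    simpa using hfM 0 ⟨le_rfl, by positivity⟩
  have htπ : t < π / 2 := arctan_lt_pi_div_two M
  let g : ℝ → ℝ := fun y ↦ tan y - f (k * π + y)
  have hg : ContinuousOn g (Icc 0 t) := by
    refine (continuousOn_tan_Ioo.mono fun y hy ↦ ⟨?_, ?_⟩).sub
      (hf.comp (continuousOn_const.add continuousOn_id) fun y hy ↦ ⟨?_, ?_⟩) <;>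
      linarith [hy.1, hy.2, pi_pos]
  have hg₀ : g 0 < 0 := by simpa [g] using hf₀
  have hgt : 0 ≤ g t := by
    simpa [g, t, tan_arctan] using hfM t ⟨ht₀.le, htπ.le⟩
  obtain ⟨y, hy, hgy⟩ := intermediate_value_Icc ht₀.le hg ⟨hg₀.le, hgt⟩
  have hy₀ : y ≠ 0 := by rintro rfl; exact hg₀.ne hgy
  refine ⟨k * π + y, ⟨by linarith [lt_of_le_of_ne hy.1 hy₀.symm], by linarith [hy.2]⟩, ?_⟩
  rw [← sub_eq_zero.1 hgy, add_comm, tan_periodic.int_mul k]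

theorem exists_tan_mul_eq_of_continuousOn (k : ℤ) {h : ℝ} (hh : 0 < h) {f : ℝ → ℝ}
    (hf : ContinuousOn f (Icc (k * π / h) (k * π / h + π / (2 * h)))) (hf₀ : 0 < f (k * π / h)) :
    ∃ q ∈ Ioo (k * π / h) (k * π / h + π / (2 * h)), tan (h * q) = f q := by
  have hR : k * π / h + π / (2 * h) = (k * π + π / 2) / h := by field_simp
  rw [hR] at hf ⊢
  have hcomp : ContinuousOn (fun x ↦ f (x / h)) (Icc (k * π) (k * π + π / 2)) :=
    hf.comp (continuousOn_id.div_const h) fun x hx ↦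
      ⟨div_le_div_of_nonneg_right hx.1 hh.le, div_le_div_of_nonneg_right hx.2 hh.le⟩
  obtain ⟨x, hx, hfx⟩ := exists_tan_eq_of_continuousOn k hcomp (by simpa using hf₀)
  refine ⟨x / h, ⟨div_lt_div_of_pos_right hx.1 hh, div_lt_div_of_pos_right hx.2 hh⟩, ?_⟩
  rwa [mul_div_cancel₀ x hh.ne']

theorem exists_mth_solution (a h : ℝ) (ha : 0 < a) (hh : 0 < h)
    (hha : h < Real.pi / (2 * a)) :
    ∀ m : ℕ, 2 ≤ m →
      ∃ q ∈ Set.Ioo (((m : ℝ) - 1) * Real.pi / h)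
          (((m : ℝ) - 1) * Real.pi / h + Real.pi / (2 * h)),
        q ≠ a ∧ Real.tan (h * q) = 2 * a * q / (q ^ 2 - a ^ 2) := by
  intro m hm
  set L := ((m : ℝ) - 1) * π / h
  have hm₁ : (1 : ℝ) ≤ (m : ℝ) - 1 := by
    have : (2 : ℝ) ≤ m := by exact_mod_cast hm
    linarith
  have hπh : 2 * a < π / h := by
    rw [lt_div_iff₀ hh]
    rw [lt_div_iff₀ (by positivity)] at hha
    linarith
  have haL : a < L := by
    have : π / h ≤ L := div_le_div_of_nonneg_right (le_mul_of_one_le_left pi_pos.le hm₁) hh.le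
    linarith
  have hf : ContinuousOn (fun q ↦ 2 * a * q / (q ^ 2 - a ^ 2)) (Icc L (L + π / (2 * h))) :=
    (continuousOn_const.mul continuousOn_id).div (by fun_prop) fun q hq ↦ by
      nlinarith [hq.1]
  have hf₀ : 0 < 2 * a * L / (L ^ 2 - a ^ 2) := by
    have : 0 < L ^ 2 - a ^ 2 := by nlinarith
    positivity
  have hL : ((m - 1 : ℤ) : ℝ) * π / h = L := by push_cast; rfl
  obtain ⟨q, hq, htan⟩ := exists_tan_mul_eq_of_continuousOn (m - 1) hh (hL ▸ hf) (hL ▸ hf₀)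
  rw [hL] at hq
  exact ⟨q, hq, (haL.trans hq.1).ne', htan⟩
end

section
/- Let a > 0, h > 0 with ha ≤ 1, and let α₁ be the smallest positive solution of tan(hq) = 2aq/(q² − a²). Then α₁ ≤ √(a² + 2a/h) ≤ √(3a)/√h. -/
/-!
With `g q = h q - 2 arctan (a / q)`, every zero `q > a` of `g` solves `tan (h q) = 2aq / (q² - a²)`
by the double-angle formula. Since `h a ≤ 1 < π / 2`, `g a = h a - π / 2 < 0`, while at
`s = √(a² + 2a/h)` the bound `arctan x ≤ x` gives `2 arctan (a / s) ≤ 2a / s ≤ h s`, so `g s ≥ 0`.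
The intermediate value theorem yields a solution in `(a, s]`, hence `α₁ ≤ s`.
-/

open Real Set

namespace Real

lemma arctan_le_self {x : ℝ} (hx : 0 ≤ x) : arctan x ≤ x := by
  simpa only [tan_arctan] using le_tan (arctan_nonneg.2 hx) (arctan_lt_pi_div_two x)

lemma tan_two_mul_arctan_div {a q : ℝ} (hq : q ≠ 0) (haq : q ^ 2 - a ^ 2 ≠ 0) :
    tan (2 * arctan (a / q)) = 2 * a * q / (q ^ 2 - a ^ 2) := by
  rw [tan_two_mul, tan_arctan]
  field_simp

end Real

lemma exists_mul_eq_two_mul_arctan_div {a h : ℝ} (ha : 0 < a) (hh : 0 < h)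
    (hha : h * a < π / 2) :
    ∃ q ∈ Ioc a √(a ^ 2 + 2 * a / h), h * q = 2 * arctan (a / q) := by
  set s := √(a ^ 2 + 2 * a / h)
  have hs2 : s ^ 2 = a ^ 2 + 2 * a / h := sq_sqrt (by positivity)
  have has : a < s := lt_sqrt_of_sq_lt (by linarith [div_pos (mul_pos two_pos ha) hh])
  have hs : 0 < s := ha.trans has
  set g : ℝ → ℝ := fun q ↦ h * q - 2 * arctan (a / q)
  have hga : g a < 0 := by
    simp only [g, div_self ha.ne', arctan_one]
    linarith
  have hgs : 0 ≤ g s := by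
    have hsq : 2 * a ≤ h * s ^ 2 := by
      rw [hs2, mul_add, mul_div_cancel₀ _ hh.ne']
      nlinarith
    have hdiv : 2 * (a / s) ≤ h * s := by
      rw [← mul_div_assoc, div_le_iff₀ hs]
      nlinarith
    linarith [arctan_le_self (div_nonneg ha.le hs.le)]
  have hcont : ContinuousOn g (Icc a s) :=
    (continuousOn_const.mul continuousOn_id).sub <| continuousOn_const.mul <|
      continuous_arctan.comp_continuousOn <|
        continuousOn_const.div continuousOn_id fun x hx ↦ (ha.trans_le hx.1).ne'
  obtain ⟨q, hq, hgq⟩ := intermediate_value_Ioc has.le hcont ⟨hga, hgs⟩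
  exact ⟨q, hq, sub_eq_zero.1 hgq⟩

theorem alpha_one_upper_bound (a h α₁ : ℝ) (ha : 0 < a) (hh : 0 < h)
    (hha : h * a ≤ 1)
    (hmin : IsLeast {q : ℝ | 0 < q ∧ q ≠ a ∧
      Real.tan (h * q) = 2 * a * q / (q ^ 2 - a ^ 2)} α₁) :
    α₁ ≤ Real.sqrt (a ^ 2 + 2 * a / h) ∧
      Real.sqrt (a ^ 2 + 2 * a / h) ≤ Real.sqrt (3 * a) / Real.sqrt h := by
  obtain ⟨q, ⟨haq, hqs⟩, hq⟩ :=
    exists_mul_eq_two_mul_arctan_div ha hh (hha.trans_lt (by linarith [pi_gt_three]))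
  have hq0 : 0 < q := ha.trans haq
  have hsol : Real.tan (h * q) = 2 * a * q / (q ^ 2 - a ^ 2) := by
    rw [hq, tan_two_mul_arctan_div hq0.ne' (by nlinarith)]
  refine ⟨(hmin.2 ⟨hq0, haq.ne', hsol⟩).trans hqs, ?_⟩
  rw [← sqrt_div (by positivity)]
  refine sqrt_le_sqrt ?_
  rw [le_div_iff₀ hh, add_mul, div_mul_cancel₀ _ hh.ne']
  nlinarith
end

section
/- Let a > 0, h > 0 with ha ≤ 1/3, and let α₁ be the smallest positive solution of tan(hq) = 2aq/(q² − a²). Then α₁ ≥ √(a² + 2a/(h + 2ah²)). -/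
/-! Every positive root `q ≠ a`, not only the least one, satisfies the bound.
On `(0, √2)` we have `tan x < x / (1 - x²/2)`, from `sin x < x` and `1 - x²/2 ≤ cos x`.
A root `q > a` of `tan (h q) = 2 a q / (q² - a²)` with `h q < √2` therefore satisfies
`q² (h + a h²) > 2 a + h a²`, while for small `h a` we have
`2 a + h a² ≥ (a² + 2a / (h + 2 a h²)) (h + a h²)`. A root `q < a` is impossible, since there the left side is
positive and the right side negative. -/

open Real

theorem Real.tan_lt_div_one_sub_sq_div_two {x : ℝ} (hx : 0 < x) (hx2 : x ^ 2 < 2) :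
    tan x < x / (1 - x ^ 2 / 2) := by
  have hc : 0 < 1 - x ^ 2 / 2 := by linarith
  have hcos : 1 - x ^ 2 / 2 ≤ cos x := one_sub_sq_div_two_le_cos
  calc tan x = sin x / cos x := tan_eq_sin_div_cos x
    _ < x / cos x := div_lt_div_of_pos_right (sin_lt hx) (hc.trans_le hcos)
    _ ≤ x / (1 - x ^ 2 / 2) := div_le_div_of_nonneg_left hx.le hc hcos

section Roots

variable {a h q : ℝ}

theorem tan_mul_ne_of_lt (hh : 0 < h) (hq : 0 < q) (hqa : q < a) (hhq : h * q < π / 2) :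
    tan (h * q) ≠ 2 * a * q / (q ^ 2 - a ^ 2) := by
  have hrhs : 2 * a * q / (q ^ 2 - a ^ 2) < 0 :=
    div_neg_of_pos_of_neg (by nlinarith) (by nlinarith)
  exact (hrhs.trans (tan_pos_of_pos_of_lt_pi_div_two (mul_pos hh hq) hhq)).ne'

theorem two_mul_add_lt_sq_mul_of_tan_eq (ha : 0 < a) (hh : 0 < h) (haq : a < q)
    (hhq : (h * q) ^ 2 < 2) (htan : tan (h * q) = 2 * a * q / (q ^ 2 - a ^ 2)) :
    2 * a + h * a ^ 2 < q ^ 2 * (h + a * h ^ 2) := by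
  have hq : 0 < q := ha.trans haq
  have hlt := tan_lt_div_one_sub_sq_div_two (mul_pos hh hq) hhq
  rw [htan, div_lt_div_iff₀ (by nlinarith) (by linarith)] at hlt
  nlinarith

end Roots

section Bound

noncomputable def rootBound (a h : ℝ) : ℝ := a ^ 2 + 2 * a / (h + 2 * a * h ^ 2)

variable {a h : ℝ}

theorem sq_mul_rootBound_lt_two (ha : 0 < a) (hh : 0 < h) (hsmall : 2 * (h * a) ^ 2 + h * a ≤ 2) :
    h ^ 2 * rootBound a h < 2 := by
  have ht : 0 < h * a := mul_pos hh ha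
  have heq : h ^ 2 * rootBound a h = (h * a) ^ 2 + 2 * (h * a) / (1 + 2 * (h * a)) := by
    unfold rootBound; field_simp
  have hfrac : 2 * (h * a) / (1 + 2 * (h * a)) < 1 := by
    rw [div_lt_one (by positivity)]; linarith
  rw [heq]; nlinarith

theorem rootBound_mul_le (ha : 0 < a) (hh : 0 < h) (hsmall : 2 * (h * a) ^ 2 + h * a ≤ 2) :
    rootBound a h * (h + a * h ^ 2) ≤ 2 * a + h * a ^ 2 := by
  have hD : 0 < h + 2 * a * h ^ 2 := by positivity
  have hsub : 2 * a + h * a ^ 2 - rootBound a h * (h + a * h ^ 2) =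
      a ^ 2 * h ^ 2 * (2 - h * a - 2 * (h * a) ^ 2) / (h + 2 * a * h ^ 2) := by
    unfold rootBound; field_simp; ring
  rw [← sub_nonneg, hsub]
  exact div_nonneg (mul_nonneg (by positivity) (by linarith)) hD.le

end Bound

theorem alpha_one_lower_bound (a h α₁ : ℝ) (ha : 0 < a) (hh : 0 < h)
    (hha : h * a ≤ 1 / 3)
    (hmin : IsLeast {q : ℝ | 0 < q ∧ q ≠ a ∧
      Real.tan (h * q) = 2 * a * q / (q ^ 2 - a ^ 2)} α₁) :
    Real.sqrt (a ^ 2 + 2 * a / (h + 2 * a * h ^ 2)) ≤ α₁ := by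
  obtain ⟨hq, hqa, htan⟩ := hmin.1
  have hsmall : 2 * (h * a) ^ 2 + h * a ≤ 2 := by nlinarith [mul_pos hh ha]
  rw [sqrt_le_left hq.le]
  by_contra! hbelow
  change α₁ ^ 2 < rootBound a h at hbelow
  rcases hqa.lt_or_gt with hlt_a | hgt_a
  · refine tan_mul_ne_of_lt hh hq hlt_a ?_ htan
    nlinarith [pi_gt_three]
  · have hhq : (h * α₁) ^ 2 < 2 := by
      nlinarith [sq_mul_rootBound_lt_two ha hh hsmall, pow_pos hh 2]
    have hroot := two_mul_add_lt_sq_mul_of_tan_eq ha hh hgt_a hhq htan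
    nlinarith [rootBound_mul_le ha hh hsmall, mul_pos ha (pow_pos hh 2)]
end

section
/- Let a > 0 and for each h ∈ (0, 1/(3a)) let α₁(h) be the smallest positive solution of tan(hq) = 2aq/(q² − a²). Then α₁(h)/√(2a/h) → 1 as h → 0⁺. -/
/-!
Write `r = √(2a/h)`. Since `sin x < x` and `cos x ≥ 1 - x²/2`, every root `q > a` satisfies
`2a ≤ h q² (1 + a h)`, i.e. `q² ≥ r² / (1 + a h)`. Conversely `x < tan x` makes
`tan (hq) (q² - a²) - 2aq` nonnegative at `q = √(a² + r²)` and it equals `-2a²` at `q = a`, so the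
intermediate value theorem gives a root below `√(a² + r²)`. Roots below `a` are impossible by
a sign comparison. Hence `1 / (1 + a h) ≤ (α₁ h / r)² ≤ 1 + a h / 2`, and both bounds tend to `1`.
-/

open Real Set Filter Topology

lemma Real.tan_mul_one_sub_sq_div_two_lt {x : ℝ} (hx0 : 0 < x) (hx2 : x ^ 2 < 2) :
    tan x * (1 - x ^ 2 / 2) < x := by
  have hxπ : x < π := by nlinarith [pi_gt_three]
  have hcos : 0 < cos x := one_sub_sq_div_two_le_cos.trans_lt' (by linarith)
  have htan : 0 ≤ tan x := by
    rw [tan_eq_sin_div_cos]; exact div_nonneg (sin_pos_of_pos_of_lt_pi hx0 hxπ).le hcos.le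
  calc tan x * (1 - x ^ 2 / 2) ≤ tan x * cos x := by gcongr; exact one_sub_sq_div_two_le_cos
    _ = sin x := tan_mul_cos hcos.ne'
    _ < x := sin_lt hx0

def tanRoots (a h : ℝ) : Set ℝ :=
  {q | 0 < q ∧ q ≠ a ∧ tan (h * q) = 2 * a * q / (q ^ 2 - a ^ 2)}

section

variable {a h q : ℝ}

lemma tanRoots_subset_Ioi (hh : 0 < h) (ha : 0 < a) (hha : h * a < π / 2) :
    tanRoots a h ⊆ Ioi a := by
  rintro q ⟨hq0, hqa, heq⟩
  rw [mem_Ioi]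
  by_contra! hle
  have hlt : q < a := lt_of_le_of_ne hle hqa
  have htan : 0 < tan (h * q) :=
    tan_pos_of_pos_of_lt_pi_div_two (by positivity) ((mul_lt_mul_of_pos_left hlt hh).trans hha)
  have hrhs : 2 * a * q / (q ^ 2 - a ^ 2) < 0 := div_neg_of_pos_of_neg (by positivity) (by nlinarith)
  linarith

lemma mem_tanRoots_iff_of_lt (ha : 0 < a) (haq : a < q) :
    q ∈ tanRoots a h ↔ tan (h * q) * (q ^ 2 - a ^ 2) = 2 * a * q := by
  have hsq : q ^ 2 - a ^ 2 ≠ 0 := by nlinarith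
  simp only [tanRoots, mem_ofPred_eq, ha.trans haq, haq.ne', ne_eq, not_false_eq_true, true_and,
    eq_div_iff hsq]

lemma two_mul_le_of_tan_mul_eq (ha : 0 < a) (hh : 0 < h) (haq : a < q)
    (heq : tan (h * q) * (q ^ 2 - a ^ 2) = 2 * a * q) : 2 * a ≤ h * q ^ 2 * (1 + a * h) := by
  have hq : 0 < q := ha.trans haq
  by_cases hx2 : (h * q) ^ 2 < 2
  · have hlt := tan_mul_one_sub_sq_div_two_lt (mul_pos hh hq) hx2
    have hsq : 0 < q ^ 2 - a ^ 2 := by nlinarith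
    have : 2 * a * q * (1 - (h * q) ^ 2 / 2) < h * q * (q ^ 2 - a ^ 2) := by
      rw [← heq, mul_right_comm]; exact mul_lt_mul_of_pos_right hlt hsq
    nlinarith [mul_pos (mul_pos hh hq) (mul_pos ha ha)]
  · nlinarith [mul_pos hh hq]

lemma exists_mem_tanRoots_le (ha : 0 < a) (hh : 0 < h) (haq : a < q) (hhq : h * q < π / 2)
    (hgrowth : 2 * a ≤ h * (q ^ 2 - a ^ 2)) : ∃ c ∈ tanRoots a h, c ≤ q := by
  set F : ℝ → ℝ := fun y => tan (h * y) * (y ^ 2 - a ^ 2) - 2 * a * y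
  have hcos : ∀ y ∈ Icc a q, cos (h * y) ≠ 0 := fun y hy =>
    (cos_pos_of_mem_Ioo ⟨by nlinarith [pi_pos, hy.1],
      (mul_le_mul_of_nonneg_left hy.2 hh.le).trans_lt hhq⟩).ne'
  have hF : ContinuousOn F (Icc a q) :=
    ((continuousOn_tan.comp (by fun_prop) hcos).mul (by fun_prop)).sub (by fun_prop)
  have hFa : F a = -(2 * a * a) := by simp [F]
  have hFq : 0 ≤ F q := by
    have hq : 0 < q := ha.trans haq
    have htan := lt_tan (mul_pos hh hq) hhq
    have hsq : 0 < q ^ 2 - a ^ 2 := by nlinarith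
    nlinarith [mul_lt_mul_of_pos_right htan hsq, mul_le_mul_of_nonneg_left hgrowth hq.le]
  obtain ⟨c, hc, hFc⟩ := intermediate_value_Icc haq.le hF ⟨by rw [hFa]; nlinarith, hFq⟩
  have hac : a < c := hc.1.lt_of_ne (by rintro rfl; rw [hFa] at hFc; nlinarith)
  exact ⟨c, (mem_tanRoots_iff_of_lt ha hac).2 (sub_eq_zero.1 hFc), hc.2⟩

lemma sq_div_sqrt_mem_Icc_of_isLeast (ha : 0 < a) (hh : 0 < h) (hh3 : h < 1 / (3 * a))
    {α : ℝ} (hα : IsLeast (tanRoots a h) α) :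
    (α / √(2 * a / h)) ^ 2 ∈ Icc (1 / (1 + a * h)) (1 + a * h / 2) := by
  have hah : a * h < 1 / 3 := by rw [lt_div_iff₀ (by positivity)] at hh3; linarith
  have hπ := pi_gt_three
  have haα : a < α := tanRoots_subset_Ioi hh ha (by linarith) hα.1
  have hlower := two_mul_le_of_tan_mul_eq ha hh haα ((mem_tanRoots_iff_of_lt ha haα).1 hα.1)
  set q := √(a ^ 2 + 2 * a / h)
  have hq2 : q ^ 2 = a ^ 2 + 2 * a / h := sq_sqrt (by positivity)
  have hhq2 : (h * q) ^ 2 = a * h * (a * h) + 2 * (a * h) := by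
    rw [mul_pow, hq2]; field_simp
  have haq : a < q := lt_sqrt_of_sq_lt (by linarith [div_pos (mul_pos two_pos ha) hh])
  have hhq : h * q < 1 := by nlinarith [mul_pos hh (ha.trans haq), mul_pos ha hh]
  obtain ⟨c, hc, hcq⟩ :=
    exists_mem_tanRoots_le ha hh haq (by linarith) (by rw [hq2]; field_simp; simp)
  have hupper : α ^ 2 ≤ q ^ 2 := pow_le_pow_left₀ hα.1.1.le ((hα.2 hc).trans hcq) 2
  rw [div_pow, sq_sqrt (by positivity), div_div_eq_mul_div]
  constructor
  · rw [div_le_div_iff₀ (by positivity) (by positivity)]; nlinarith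
  · rw [div_le_iff₀ (by positivity)]; rw [hq2] at hupper
    have : 2 * a / h * h = 2 * a := by field_simp
    nlinarith

end

theorem alpha_one_asymptotic (a : ℝ) (ha : 0 < a) (α₁ : ℝ → ℝ)
    (hmin : ∀ h ∈ Set.Ioo (0 : ℝ) (1 / (3 * a)),
      IsLeast {q : ℝ | 0 < q ∧ q ≠ a ∧
        Real.tan (h * q) = 2 * a * q / (q ^ 2 - a ^ 2)} (α₁ h)) :
    Filter.Tendsto (fun h : ℝ => α₁ h / Real.sqrt (2 * a / h))
      (nhdsWithin 0 (Set.Ioi 0)) (nhds 1) := by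
  have hdom : ∀ᶠ h in 𝓝[>] (0 : ℝ), h ∈ Ioo 0 (1 / (3 * a)) := Ioo_mem_nhdsGT (by positivity)
  have hbounds : ∀ᶠ h in 𝓝[>] (0 : ℝ),
      (α₁ h / √(2 * a / h)) ^ 2 ∈ Icc (1 / (1 + a * h)) (1 + a * h / 2) :=
    hdom.mono fun h hh => sq_div_sqrt_mem_Icc_of_isLeast ha hh.1 hh.2 (hmin h hh)
  have hlow : Tendsto (fun h : ℝ => 1 / (1 + a * h)) (𝓝[>] 0) (𝓝 1) := by
    have : ContinuousAt (fun h : ℝ => 1 / (1 + a * h)) 0 := by fun_prop (disch := simp)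
    simpa using this.tendsto.mono_left nhdsWithin_le_nhds
  have hup : Tendsto (fun h : ℝ => 1 + a * h / 2) (𝓝[>] 0) (𝓝 1) := by
    have : Continuous (fun h : ℝ => 1 + a * h / 2) := by fun_prop
    simpa using (this.tendsto 0).mono_left nhdsWithin_le_nhds
  have hsq := tendsto_of_tendsto_of_tendsto_of_le_of_le' hlow hup
    (hbounds.mono fun _ hh => hh.1) (hbounds.mono fun _ hh => hh.2)
  have hsqrt : Tendsto (fun h => √((α₁ h / √(2 * a / h)) ^ 2)) (𝓝[>] 0) (𝓝 1) := by
    simpa using hsq.sqrt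
  refine hsqrt.congr' ?_
  filter_upwards [hdom] with h hh
  exact sqrt_sq (div_nonneg (hmin h hh).1.1.le (sqrt_nonneg _))
end

section
/- Let a > 0, α > 0, z ≥ 0 with α²z² ≤ 3ha ≤ 1 and αz ≤ 1 for some h > 0. Then α(1 − 3ha/2) ≤ α cos(αz) + a sin(αz) ≤ α(1 + ha). -/
namespace Real

theorem mul_cos_add_mul_sin_le {α a t : ℝ} (hα : 0 ≤ α) (ha : 0 ≤ a) (ht : 0 ≤ t) :
    α * cos t + a * sin t ≤ α + a * t := by
  have hcos : α * cos t ≤ α := mul_le_of_le_one_right hα (cos_le_one t)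
  have hsin : a * sin t ≤ a * t := mul_le_mul_of_nonneg_left (sin_le ht) ha
  linarith

theorem mul_one_sub_sq_div_two_le_mul_cos_add_mul_sin {α a t : ℝ} (hα : 0 ≤ α) (ha : 0 ≤ a)
    (ht₀ : 0 ≤ t) (htπ : t ≤ π) :
    α * (1 - t ^ 2 / 2) ≤ α * cos t + a * sin t := by
  have hcos : α * (1 - t ^ 2 / 2) ≤ α * cos t :=
    mul_le_mul_of_nonneg_left one_sub_sq_div_two_le_cos hα
  have hsin : 0 ≤ a * sin t := mul_nonneg ha (sin_nonneg_of_nonneg_of_le_pi ht₀ htπ)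
  linarith

end Real

theorem cos_sin_combination_bounds_general (a h α z : ℝ) (ha : 0 < a)
    (hα : 0 < α) (hz : 0 ≤ z) (hzh : z ≤ h)
    (h1 : α ^ 2 * z ^ 2 ≤ 3 * h * a) (h3 : α * z ≤ 1) :
    α * (1 - 3 * h * a / 2) ≤ α * Real.cos (α * z) + a * Real.sin (α * z) ∧
      α * Real.cos (α * z) + a * Real.sin (α * z) ≤ α * (1 + h * a) := by
  have ht : 0 ≤ α * z := by positivity
  constructor
  · calc α * (1 - 3 * h * a / 2) ≤ α * (1 - (α * z) ^ 2 / 2) := by gcongr; linarith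
      _ ≤ _ := Real.mul_one_sub_sq_div_two_le_mul_cos_add_mul_sin hα.le ha.le ht
          (h3.trans (by linarith [Real.pi_gt_three]))
  · calc _ ≤ α + a * (α * z) := Real.mul_cos_add_mul_sin_le hα.le ha.le ht
      _ = α * (1 + z * a) := by ring
      _ ≤ α * (1 + h * a) := by gcongr

theorem cos_sin_combination_bounds (a h α z : ℝ) (ha : 0 < a) (hh : 0 < h)
    (hα : 0 < α) (hz : 0 ≤ z) (hzh : z ≤ h)
    (h1 : α ^ 2 * z ^ 2 ≤ 3 * h * a) (h2 : 3 * h * a ≤ 1) (h3 : α * z ≤ 1) :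
    α * (1 - 3 * h * a / 2) ≤ α * Real.cos (α * z) + a * Real.sin (α * z) ∧
      α * Real.cos (α * z) + a * Real.sin (α * z) ≤ α * (1 + h * a) :=
  cos_sin_combination_bounds_general a h α z ha hα hz hzh h1 h3
end

section
/- Let a > 0, α > 0, h > 0, and z, w ∈ [0, h] with α²h² ≤ 3ha ≤ 1 and αh ≤ 1. Then α²(1 − 3ha/2)² ≤ [α cos(αz) + a sin(αz)]·[α cos(αw) + a sin(αw)] ≤ α²(1 + ha)². -/
open Real Set

/-!
Write `f x = α cos (α x) + a sin (α x)`. On `[0, h]` the argument `α x` lies in `[0, 1] ⊆ [0, π]`,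
so `sin (α x) ∈ [0, α x]` and `cos (α x) ∈ [1 - (α x)² / 2, 1]`. Hence
`α (1 - α² h² / 2) ≤ f x ≤ α (1 + h a)`, and `α² h² ≤ 3 h a` turns the lower bound into
`α (1 - 3 h a / 2)`, which is nonnegative because `3 h a ≤ 1`. Multiplying the bounds for
`f z` and `f w` gives the claim.
-/

lemma sq_le_mul_and_mul_le_sq {R : Type*} [Semiring R] [PartialOrder R] [IsOrderedRing R]
    {l u x y : R} (hl : 0 ≤ l) (hx : x ∈ Icc l u) (hy : y ∈ Icc l u) :
    l ^ 2 ≤ x * y ∧ x * y ≤ u ^ 2 := by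
  rw [sq, sq]
  exact ⟨mul_le_mul hx.1 hy.1 hl (hl.trans hx.1),
    mul_le_mul hx.2 hy.2 (hl.trans hy.1) (hl.trans (hx.1.trans hx.2))⟩

section MulCosAddMulSin

variable {a α t : ℝ}

lemma mul_cos_add_mul_sin_le (ha : 0 ≤ a) (hα : 0 ≤ α) (ht : 0 ≤ t) :
    α * cos t + a * sin t ≤ α + a * t := by
  gcongr
  · exact mul_le_of_le_one_right hα (cos_le_one t)
  · exact sin_le ht

lemma mul_one_sub_sq_div_two_le_mul_cos_add_mul_sin (ha : 0 ≤ a) (hα : 0 ≤ α)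
    (ht₀ : 0 ≤ t) (htπ : t ≤ π) :
    α * (1 - t ^ 2 / 2) ≤ α * cos t + a * sin t := by
  have hsin : 0 ≤ a * sin t := mul_nonneg ha (sin_nonneg_of_nonneg_of_le_pi ht₀ htπ)
  have hcos : α * (1 - t ^ 2 / 2) ≤ α * cos t :=
    mul_le_mul_of_nonneg_left one_sub_sq_div_two_le_cos hα
  linarith

lemma mul_cos_add_mul_sin_mem_Icc {h x : ℝ} (ha : 0 ≤ a) (hα : 0 ≤ α) (hx : x ∈ Icc 0 h)
    (h1 : α ^ 2 * h ^ 2 ≤ 3 * h * a) (h3 : α * h ≤ 1) :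
    α * cos (α * x) + a * sin (α * x) ∈ Icc (α * (1 - 3 * h * a / 2)) (α * (1 + h * a)) := by
  have hαx₀ : 0 ≤ α * x := mul_nonneg hα hx.1
  have hαxh : α * x ≤ α * h := mul_le_mul_of_nonneg_left hx.2 hα
  constructor
  · have hsq : (α * x) ^ 2 ≤ 3 * h * a := by
      calc (α * x) ^ 2 ≤ (α * h) ^ 2 := pow_le_pow_left₀ hαx₀ hαxh 2
        _ ≤ 3 * h * a := by rwa [mul_pow]
    calc α * (1 - 3 * h * a / 2) ≤ α * (1 - (α * x) ^ 2 / 2) := by gcongr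
      _ ≤ _ := mul_one_sub_sq_div_two_le_mul_cos_add_mul_sin ha hα hαx₀
          (by linarith [pi_gt_three])
  · calc _ ≤ α + a * (α * x) := mul_cos_add_mul_sin_le ha hα hαx₀
      _ ≤ α + a * (α * h) := by gcongr
      _ = α * (1 + h * a) := by ring

end MulCosAddMulSin

theorem cos_sin_product_bounds_general (a h α z w : ℝ) (ha : 0 < a)
    (hα : 0 < α) (hz : z ∈ Set.Icc 0 h) (hw : w ∈ Set.Icc 0 h)
    (h1 : α ^ 2 * h ^ 2 ≤ 3 * h * a) (h2 : 3 * h * a ≤ 1) (h3 : α * h ≤ 1) :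
    α ^ 2 * (1 - 3 * h * a / 2) ^ 2 ≤
      (α * Real.cos (α * z) + a * Real.sin (α * z)) *
        (α * Real.cos (α * w) + a * Real.sin (α * w)) ∧
    (α * Real.cos (α * z) + a * Real.sin (α * z)) *
        (α * Real.cos (α * w) + a * Real.sin (α * w)) ≤
      α ^ 2 * (1 + h * a) ^ 2 := by
  have hl : 0 ≤ α * (1 - 3 * h * a / 2) := mul_nonneg hα.le (by linarith)
  rw [← mul_pow, ← mul_pow]
  exact sq_le_mul_and_mul_le_sq hl
    (mul_cos_add_mul_sin_mem_Icc ha.le hα.le hz h1 h3)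
    (mul_cos_add_mul_sin_mem_Icc ha.le hα.le hw h1 h3)

theorem cos_sin_product_bounds (a h α z w : ℝ) (ha : 0 < a) (hh : 0 < h)
    (hα : 0 < α) (hz : z ∈ Set.Icc 0 h) (hw : w ∈ Set.Icc 0 h)
    (h1 : α ^ 2 * h ^ 2 ≤ 3 * h * a) (h2 : 3 * h * a ≤ 1) (h3 : α * h ≤ 1) :
    α ^ 2 * (1 - 3 * h * a / 2) ^ 2 ≤
      (α * Real.cos (α * z) + a * Real.sin (α * z)) *
        (α * Real.cos (α * w) + a * Real.sin (α * w)) ∧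
    (α * Real.cos (α * z) + a * Real.sin (α * z)) *
        (α * Real.cos (α * w) + a * Real.sin (α * w)) ≤
      α ^ 2 * (1 + h * a) ^ 2 :=
  cos_sin_product_bounds_general a h α z w ha hα hz hw h1 h2 h3
end

section
/- Let a > 0, h > 0 with ah ≤ 1/3, and let α₁ be the smallest positive solution of tan(hq) = 2aq/(q² − a²). Then for all z, w ∈ [0, h] and all t ≥ s, the quantity P₁(z,t,w,s) := 2e^{−α₁²(t−s)}[α₁ cos(α₁z) + a sin(α₁z)][α₁ cos(α₁w) + a sin(α₁w)]/(2a + h(a² + α₁²)) satisfies |P₁(z,t,w,s) − (α₁²/(2a)) e^{−α₁²(t−s)}| ≤ (5/2) h α₁² e^{−α₁²(t−s)}. -/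
/-!
The least root `α₁` exceeds `a` and, by the intermediate value theorem applied on the branch of
`tan` through `0`, is at most the `b` with `h (b² - a²) = 2a`; conversely
`tan x ≤ x / (1 - x² / 2)` gives `h (α₁² - a²) ≥ 2a (1 - (h α₁)² / 2)`. So the denominator
`2a + h (a² + α₁²)` is `4a (1 + O(a h))`, while Taylor bounds on `cos` and `sin` show
`α₁ cos (α₁ z) + a sin (α₁ z) = α₁ (1 + O(a h))` on `[0, h]`. The positive factor
`exp (-α₁² (t - s))` is common to both sides.
-/

open Real Set

/-- `q` solves the eigenvalue equation of `-d²/dz²` on `[0, h]` with the Robin conditions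
`u' = a u` at `0` and `u' = -a u` at `h`; the eigenfunction is `q cos (q z) + a sin (q z)`. -/
def RobinRoot (a h q : ℝ) : Prop :=
  0 < q ∧ q ≠ a ∧ tan (h * q) = 2 * a * q / (q ^ 2 - a ^ 2)

lemma tan_mul_one_sub_sq_div_two_le {x : ℝ} (hx0 : 0 ≤ x) (hx : x ^ 2 ≤ 2) :
    tan x * (1 - x ^ 2 / 2) ≤ x := by
  have hx_lt : x < π / 2 := by nlinarith [pi_gt_three]
  have hcos : 0 < cos x := cos_pos_of_mem_Ioo ⟨by linarith, hx_lt⟩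
  calc tan x * (1 - x ^ 2 / 2)
      ≤ tan x * cos x := mul_le_mul_of_nonneg_left one_sub_sq_div_two_le_cos
        (tan_nonneg_of_nonneg_of_le_pi_div_two hx0 hx_lt.le)
    _ = sin x := tan_mul_cos hcos.ne'
    _ ≤ x := sin_le hx0

namespace RobinRoot

variable {a h q : ℝ}

lemma coeff_lt (hq : RobinRoot a h q) (ha : 0 < a) (hh : 0 ≤ h) (hha : h * a < π / 2) :
    a < q := by
  obtain ⟨hq_pos, hq_ne, hq_tan⟩ := hq
  refine lt_of_le_of_ne (not_lt.1 fun hqa => ?_) hq_ne.symm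
  have htan : 0 ≤ tan (h * q) := tan_nonneg_of_nonneg_of_le_pi_div_two (by positivity)
    (by nlinarith)
  have hrhs : 2 * a * q / (q ^ 2 - a ^ 2) < 0 :=
    div_neg_of_pos_of_neg (by positivity) (by nlinarith)
  linarith

lemma le_sq_sub_sq (hq : RobinRoot a h q) (ha : 0 ≤ a) (hh : 0 ≤ h) (haq : a < q)
    (hhq : (h * q) ^ 2 ≤ 2) :
    2 * a * (1 - (h * q) ^ 2 / 2) ≤ h * (q ^ 2 - a ^ 2) := by
  obtain ⟨hq_pos, -, hq_tan⟩ := hq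
  have hden : 0 < q ^ 2 - a ^ 2 := by nlinarith
  have key := tan_mul_one_sub_sq_div_two_le (by positivity) hhq
  rw [hq_tan, div_mul_eq_mul_div, div_le_iff₀ hden] at key
  nlinarith

end RobinRoot

/-- Intermediate value theorem for `tan (h q) (q² - a²) - 2 a q`, which is negative at `a` and,
since `x ≤ tan x`, nonnegative at `b`. -/
lemma exists_robinRoot_mem_Ioc {a h b : ℝ} (ha : 0 < a) (hh : 0 ≤ h) (hab : a < b)
    (hb : h * b < π / 2) (hb_sq : 2 * a ≤ h * (b ^ 2 - a ^ 2)) :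
    ∃ q ∈ Ioc a b, RobinRoot a h q := by
  set f : ℝ → ℝ := fun q => tan (h * q) * (q ^ 2 - a ^ 2) - 2 * a * q
  have hcont : ContinuousOn f (Icc a b) := by
    refine ContinuousOn.sub (ContinuousOn.mul ?_ (by fun_prop)) (by fun_prop)
    refine continuousOn_tan_Ioo.comp (by fun_prop) fun q hq => ⟨?_, ?_⟩ <;>
      nlinarith [hq.1, hq.2, pi_gt_three]
  have hfa : f a < 0 := by simp only [f, sub_self, mul_zero, zero_sub]; nlinarith
  have hfb : 0 ≤ f b := by
    have := mul_le_mul_of_nonneg_right (le_tan (by nlinarith) hb)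
      (by nlinarith : 0 ≤ b ^ 2 - a ^ 2)
    nlinarith
  obtain ⟨q, ⟨hqa, hqb⟩, hfq⟩ := intermediate_value_Icc hab.le hcont ⟨hfa.le, hfb⟩
  have hqa : a < q := lt_of_le_of_ne hqa (by rintro rfl; exact hfa.ne hfq)
  refine ⟨q, ⟨hqa, hqb⟩, by linarith, hqa.ne', ?_⟩
  rw [eq_div_iff (by nlinarith)]
  simp only [f] at hfq
  linarith

lemma sq_sub_sq_le_of_isLeast_robinRoot {a h α : ℝ} (ha : 0 < a) (hh : 0 < h)
    (hah : a * h ≤ 1 / 3) (hα : IsLeast {q | RobinRoot a h q} α) :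
    h * (α ^ 2 - a ^ 2) ≤ 2 * a := by
  set b := √(a ^ 2 + 2 * a / h)
  have hb : 0 ≤ b := sqrt_nonneg _
  have hb_sq : h * (b ^ 2 - a ^ 2) = 2 * a := by
    rw [sq_sqrt (by positivity)]; field_simp; ring
  have hhb_sq : (h * b) ^ 2 = (a * h) ^ 2 + 2 * (a * h) := by linear_combination h * hb_sq
  have hab : a < b := lt_of_pow_lt_pow_left₀ 2 hb (by nlinarith)
  obtain ⟨q, ⟨-, hqb⟩, hq⟩ := exists_robinRoot_mem_Ioc ha hh.le hab
    (by nlinarith [pi_gt_three, mul_pos ha hh]) hb_sq.ge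
  have hαb : α ≤ b := (hα.2 hq).trans hqb
  nlinarith [mul_le_mul hαb hαb hα.1.1.le hb]

lemma mul_cos_add_mul_sin_mem {a h α u : ℝ} (ha : 0 ≤ a) (hα : 0 ≤ α) (hu : u ∈ Icc 0 h)
    (hhα : h * α ≤ π) :
    α * cos (α * u) + a * sin (α * u) ∈ Icc (α * (1 - (h * α) ^ 2 / 2)) (α * (1 + a * h)) := by
  have hαu : 0 ≤ α * u := mul_nonneg hα hu.1
  have hαu_le : α * u ≤ h * α := by nlinarith [hu.2]
  have hcos := mul_le_mul_of_nonneg_left (one_sub_sq_div_two_le_cos (x := α * u)) hα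
  have hsin := mul_nonneg ha (sin_nonneg_of_nonneg_of_le_pi hαu (hαu_le.trans hhα))
  constructor
  · nlinarith [mul_le_mul_of_nonneg_left (pow_le_pow_left₀ hαu hαu_le 2) hα]
  · nlinarith [mul_le_mul_of_nonneg_left (cos_le_one (α * u)) hα,
      mul_le_mul_of_nonneg_left (sin_le hαu) ha, mul_le_mul_of_nonneg_left hαu_le ha]

lemma abs_two_mul_mul_div_sub_le {a h α D c₁ c₂ : ℝ} (ha : 0 < a) (hh : 0 < h)
    (hah : a * h ≤ 1 / 3) (hα : 0 ≤ α)
    (hD : 2 * a * (2 - (a * h) ^ 2 / 2) ≤ D) (hD' : D ≤ 2 * a * (2 + a * h))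
    (hc₁ : α * (1 - 7 / 6 * (a * h)) ≤ c₁) (hc₁' : c₁ ≤ α * (1 + a * h))
    (hc₂ : α * (1 - 7 / 6 * (a * h)) ≤ c₂) (hc₂' : c₂ ≤ α * (1 + a * h)) :
    |2 * c₁ * c₂ / D - α ^ 2 / (2 * a)| ≤ 5 / 2 * h * α ^ 2 := by
  set ε := a * h with hε
  have hε0 : 0 < ε := mul_pos ha hh
  have hD0 : 0 < D := lt_of_lt_of_le (by nlinarith) hD
  have hlow : 0 ≤ α * (1 - 7 / 6 * ε) := mul_nonneg hα (by linarith)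
  have hP : α ^ 2 * (1 - 7 / 6 * ε) ^ 2 ≤ c₁ * c₂ := by
    nlinarith [mul_le_mul hc₁ hc₂ hlow (hlow.trans hc₁)]
  have hP' : c₁ * c₂ ≤ α ^ 2 * (1 + ε) ^ 2 := by
    nlinarith [mul_le_mul hc₁' hc₂' (hlow.trans hc₂) (hlow.trans (hc₁.trans hc₁'))]
  have hsplit : 2 * c₁ * c₂ / D - α ^ 2 / (2 * a) =
      (4 * a * (c₁ * c₂) - α ^ 2 * D) / (2 * a * D) := by
    field_simp; ring
  have hden : 0 < 2 * a * D := by positivity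
  rw [hsplit, abs_div, abs_of_pos hden, div_le_iff₀ hden, abs_le]
  have hrhs : 5 / 2 * h * α ^ 2 * (2 * a * D) = 5 * ε * α ^ 2 * D := by rw [hε]; ring
  have hA : 0 ≤ 2 * a * α ^ 2 := by positivity
  have hεD := mul_le_mul_of_nonneg_left hD (by positivity : 0 ≤ 5 * ε * α ^ 2)
  rw [hrhs]
  constructor
  · have hP4 := mul_le_mul_of_nonneg_left hP (by positivity : 0 ≤ 4 * a)
    have hD2 := mul_le_mul_of_nonneg_left hD' (sq_nonneg α)
    have hε_poly : 0 ≤ 10 * ε - 5 / 2 * ε ^ 3 - 17 / 3 * ε + 49 / 18 * ε ^ 2 := by nlinarith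
    linarith [mul_nonneg hA hε_poly]
  · have hP4 := mul_le_mul_of_nonneg_left hP' (by positivity : 0 ≤ 4 * a)
    have hD2 := mul_le_mul_of_nonneg_left hD (sq_nonneg α)
    have hε_poly : 0 ≤ 6 * ε - 5 / 2 * ε ^ 2 - 5 / 2 * ε ^ 3 := by nlinarith
    linarith [mul_nonneg hA hε_poly]

theorem P1_approximation (a h α₁ : ℝ) (ha : 0 < a) (hh : 0 < h)
    (hah : a * h ≤ 1 / 3)
    (hmin : IsLeast {q : ℝ | 0 < q ∧ q ≠ a ∧
      Real.tan (h * q) = 2 * a * q / (q ^ 2 - a ^ 2)} α₁) :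
    ∀ z ∈ Set.Icc (0 : ℝ) h, ∀ w ∈ Set.Icc (0 : ℝ) h, ∀ s t : ℝ, s ≤ t →
      |2 * Real.exp (-α₁ ^ 2 * (t - s)) *
          (α₁ * Real.cos (α₁ * z) + a * Real.sin (α₁ * z)) *
          (α₁ * Real.cos (α₁ * w) + a * Real.sin (α₁ * w)) /
          (2 * a + h * (a ^ 2 + α₁ ^ 2)) -
        α₁ ^ 2 / (2 * a) * Real.exp (-α₁ ^ 2 * (t - s))| ≤
      5 / 2 * h * α₁ ^ 2 * Real.exp (-α₁ ^ 2 * (t - s)) := by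
  have hα : RobinRoot a h α₁ := hmin.1
  have haα : a < α₁ := hα.coeff_lt ha hh.le (by nlinarith [pi_gt_three])
  have hupper : h * (α₁ ^ 2 - a ^ 2) ≤ 2 * a :=
    sq_sub_sq_le_of_isLeast_robinRoot ha hh hah hmin
  have hhα_sq : (h * α₁) ^ 2 ≤ 7 / 3 * (a * h) := by nlinarith [mul_pos ha hh]
  have hlower := hα.le_sq_sub_sq ha.le hh.le haα (by nlinarith)
  have hmode_low : α₁ * (1 - 7 / 6 * (a * h)) ≤ α₁ * (1 - (h * α₁) ^ 2 / 2) :=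
    mul_le_mul_of_nonneg_left (by linarith) hα.1.le
  intro z hz w hw s t _
  obtain ⟨hz₁, hz₂⟩ := mul_cos_add_mul_sin_mem ha.le hα.1.le hz (by nlinarith [pi_gt_three])
  obtain ⟨hw₁, hw₂⟩ := mul_cos_add_mul_sin_mem ha.le hα.1.le hw (by nlinarith [pi_gt_three])
  have key := abs_two_mul_mul_div_sub_le ha hh hah hα.1.le
    (D := 2 * a + h * (a ^ 2 + α₁ ^ 2)) (by nlinarith) (by nlinarith)
    (hmode_low.trans hz₁) hz₂ (hmode_low.trans hw₁) hw₂
  set E := exp (-α₁ ^ 2 * (t - s))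
  rw [show ∀ c₁ c₂ D : ℝ, 2 * E * c₁ * c₂ / D - α₁ ^ 2 / (2 * a) * E =
      (2 * c₁ * c₂ / D - α₁ ^ 2 / (2 * a)) * E by intros; ring, abs_mul, abs_of_pos (exp_pos _)]
  exact mul_le_mul_of_nonneg_right key (exp_pos _).le
end
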